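/- arXiv:0901.1335 — 5 statements merged into one kernel-verified Lean document; each statement's English description precedes it below -/
import Mathlib

section
/- Let p be a prime number and let α = 1 + p^(1/p), where p^(1/p) denotes the positive real p-th root of p. Then for every integer n ≥ 1, the field ℚ(αⁿ) equals ℚ(α); in particular [ℚ(αⁿ) : ℚ] = p for all n ≥ 1. -/
/-!
With `β = p^(1/p)`, the polynomial `X^p - p` is irreducible, so `ℚ(α) = ℚ(β)` has prime degree `p`
and the subfield `ℚ(αⁿ)` is either `ℚ(α)` or `ℚ`. If `αⁿ = q` were rational, every complex
conjugate `z` of `α` would satisfy `zⁿ = q` and `(z - 1)^p = p`, hence `‖z‖ = α = 1 + β` and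
`‖z - 1‖ = β`. Equality in the triangle inequality `‖z‖ ≤ 1 + ‖z - 1‖` forces `z = α`, yet `α`
has `p ≥ 2` distinct conjugates.
-/

open Polynomial IntermediateField

theorem Rat.pow_ne_prime {p n : ℕ} (hp : p.Prime) (hn : 1 < n) (b : ℚ) : b ^ n ≠ p := by
  have : Fact p.Prime := ⟨hp⟩
  intro hb
  have hval := padicValRat.pow (p := p) (k := n) b
  rw [hb, padicValRat.self hp.one_lt] at hval
  have := Int.eq_one_of_dvd_one (Int.natCast_nonneg n) ⟨_, hval⟩
  omega

theorem minpoly_rat_eq_X_pow_sub_C {L : Type*} [Field L] [Algebra ℚ L] {p : ℕ} (hp : p.Prime)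
    {β : L} (hβ : β ^ p = p) : minpoly ℚ β = X ^ p - C (p : ℚ) :=
  (minpoly.eq_of_irreducible_of_monic
    (X_pow_sub_C_irreducible_of_prime hp (Rat.pow_ne_prime hp hp.one_lt))
    (by simp [hβ]) (monic_X_pow_sub_C _ hp.ne_zero)).symm

theorem natDegree_minpoly_add_algebraMap {K B : Type*} [Field K] [CommRing B] [Algebra K B]
    (x : B) (a : K) : (minpoly K (x + algebraMap K B a)).natDegree = (minpoly K x).natDegree := by
  rw [minpoly.add_algebraMap, natDegree_comp, natDegree_X_sub_C, mul_one]

theorem Polynomial.exists_aeval_eq_zero_ne {K M : Type*} [Field K] [Field M] [IsAlgClosed M]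
    [Algebra K M] {f : K[X]} (hf : f.Separable) (hdeg : 1 < f.natDegree) (y : M) :
    ∃ z : M, aeval z f = 0 ∧ z ≠ y := by
  classical
  have hcard : 1 < Fintype.card (f.rootSet M) := by
    rwa [card_rootSet_eq_natDegree hf (IsAlgClosed.splits _)]
  obtain ⟨⟨z₁, h₁⟩, ⟨z₂, h₂⟩, hne⟩ := Fintype.exists_pair_of_one_lt_card hcard
  have hf0 := ne_zero_of_natDegree_gt hdeg
  rw [mem_rootSet_of_ne hf0] at h₁ h₂
  by_cases hy : z₁ = y
  · exact ⟨z₂, h₂, fun h => hne (Subtype.ext (hy.trans h.symm))⟩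
  · exact ⟨z₁, h₁, hy⟩

theorem Complex.eq_one_add_norm_sub_one {z : ℂ} (h : ‖z‖ = 1 + ‖z - 1‖) : z = 1 + ‖z - 1‖ := by
  have hray : SameRay ℝ 1 (z - 1) := by
    rw [sameRay_iff_norm_add, add_sub_cancel, norm_one, h]
  have := (sameRay_iff_norm_smul_eq.mp hray)
  rw [norm_one, one_smul, Complex.real_smul, mul_one] at this
  rw [← this]; ring

theorem one_add_pow_notMem_bot {β : ℝ} (hβ : 0 ≤ β) {m : ℕ} (hm : m ≠ 0) {c : ℚ}
    (hβm : β ^ m = c) (hdeg : 1 < (minpoly ℚ (1 + β)).natDegree) {n : ℕ} (hn : n ≠ 0) :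
    (1 + β) ^ n ∉ (⊥ : IntermediateField ℚ ℝ) := by
  intro hmem
  obtain ⟨q, hq⟩ := mem_bot.mp hmem
  rw [eq_ratCast] at hq
  have hint : IsIntegral ℚ (1 + β) := minpoly.ne_zero_iff.mp (ne_zero_of_natDegree_gt hdeg)
  obtain ⟨z, hz, hne⟩ := exists_aeval_eq_zero_ne (minpoly.irreducible hint).separable hdeg
    ((1 + β : ℝ) : ℂ)
  have root_of {f : ℚ[X]} (hf : aeval (1 + β) f = 0) : aeval z f = 0 :=
    aeval_eq_zero_of_dvd_aeval_eq_zero (minpoly.dvd ℚ _ hf) hz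
  have hzc : (z - 1) ^ m = c := by
    have := root_of (f := (X - 1) ^ m - C c) (by simp [hβm])
    simpa [sub_eq_zero] using this
  have hzq : z ^ n = q := by
    have := root_of (f := X ^ n - C q) (by simp [hq])
    simpa [sub_eq_zero] using this
  have hnorm_sub : ‖z - 1‖ = β := by
    refine (pow_left_inj₀ (norm_nonneg _) hβ hm).mp ?_
    rw [← norm_pow, hzc, Complex.norm_ratCast, ← hβm, abs_of_nonneg (by positivity)]
  have hnorm : ‖z‖ = 1 + β := by
    refine (pow_left_inj₀ (norm_nonneg _) (by positivity) hn).mp ?_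
    rw [← norm_pow, hzq, Complex.norm_ratCast, hq, abs_of_nonneg (by positivity)]
  apply hne
  rw [Complex.eq_one_add_norm_sub_one (z := z) (by rw [hnorm, hnorm_sub]), hnorm_sub]
  push_cast; rfl

theorem IntermediateField.adjoin_simple_eq_of_finrank_prime {K L : Type*} [Field K] [Field L]
    [Algebra K L] {x y : L} (hy : y ∈ K⟮x⟯) (hx : (Module.finrank K K⟮x⟯).Prime)
    (hyK : y ∉ (⊥ : IntermediateField K L)) : K⟮y⟯ = K⟮x⟯ := by
  have hle : K⟮y⟯ ≤ K⟮x⟯ := adjoin_simple_le_iff.mpr hy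
  have : FiniteDimensional K K⟮x⟯ := Module.finite_of_finrank_pos hx.pos
  rcases hx.eq_one_or_self_of_dvd _ (finrank_dvd_of_le_right hle) with h | h
  · exact absurd (finrank_eq_one_iff.mp h ▸ mem_adjoin_simple_self K y) hyK
  · exact eq_of_le_of_finrank_eq hle h

/-- Let `p` be a prime and `α = 1 + p^(1/p)` (positive real `p`-th root).
Then for every `n ≥ 1`, `ℚ(αⁿ) = ℚ(α)` and `[ℚ(αⁿ) : ℚ] = p`. -/
theorem stmt_1 (p : ℕ) (hp : p.Prime) (α : ℝ)
    (hα : α = 1 + (p : ℝ) ^ ((1 : ℝ) / (p : ℝ))) (n : ℕ) (hn : 1 ≤ n) :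
    IntermediateField.adjoin ℚ {α ^ n} = IntermediateField.adjoin ℚ {α} ∧
      Module.finrank ℚ (IntermediateField.adjoin ℚ {α ^ n} : IntermediateField ℚ ℝ) = p := by
  have hβ : ((p : ℝ) ^ ((1 : ℝ) / (p : ℝ))) ^ p = p := by
    rw [one_div]; exact Real.rpow_inv_natCast_pow (Nat.cast_nonneg p) hp.ne_zero
  set β : ℝ := (p : ℝ) ^ ((1 : ℝ) / (p : ℝ))
  have hdeg : (minpoly ℚ α).natDegree = p := by
    rw [hα, add_comm, ← map_one (algebraMap ℚ ℝ), natDegree_minpoly_add_algebraMap,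
      minpoly_rat_eq_X_pow_sub_C hp hβ, natDegree_X_pow_sub_C]
  have hint : IsIntegral ℚ α := minpoly.ne_zero_iff.mp (ne_zero_of_natDegree_gt (hdeg ▸ hp.one_lt))
  have hfin : Module.finrank ℚ ℚ⟮α⟯ = p := by rw [adjoin.finrank hint, hdeg]
  have hαn : α ^ n ∉ (⊥ : IntermediateField ℚ ℝ) := by
    rw [hα]
    exact one_add_pow_notMem_bot (by positivity) hp.ne_zero hβ (hα ▸ hdeg ▸ hp.one_lt) (by omega)
  have heq := adjoin_simple_eq_of_finrank_prime (pow_mem (mem_adjoin_simple_self ℚ α) n)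
    (hfin ▸ hp) hαn
  exact ⟨heq, heq ▸ hfin⟩
end

section
/- Let 𝓕 be a finite set of nonzero polynomials with rational coefficients, and let ℚ(𝓡_𝓕) denote the subfield of the algebraic closure ℚ̄ of ℚ generated over ℚ by all roots of all polynomials in 𝓕. Then ℚ(𝓡_𝓕) has property P, i.e., there exists an algebraic number α such that αⁿ ∉ ℚ(𝓡_𝓕) for all integers n ≥ 1. -/
/-!
The field `ℚ(𝓡_𝓕)` is a finite extension of `ℚ`, of degree `d` say. Take a prime `p > d` and
`β = 2^{1/p}`: since `ℚ(β)` has prime degree `p`, it meets `ℚ(𝓡_𝓕)` only in `ℚ`, so a power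
`(1 + β)ⁿ` lying in `ℚ(𝓡_𝓕)` would be a rational number `q`. Then `(1 + w)ⁿ = q` for every complex
conjugate `w` of `β`, which the strict triangle inequality `|1 + 2^{1/p} ζ| < 1 + 2^{1/p}`
(for a `p`-th root of unity `ζ ≠ 1`) rules out.
-/

open Polynomial IntermediateField Module

theorem Rat.pow_ne_natCast_of_prime {p ℓ : ℕ} (hp : 1 < p) (hℓ : ℓ.Prime) (b : ℚ) :
    b ^ p ≠ ℓ := by
  have := Fact.mk hℓ
  intro h
  have hval : (p : ℤ) * padicValRat ℓ b = 1 := by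
    rw [← padicValRat.pow, h, padicValRat.self hℓ.one_lt]
  have := Int.eq_one_of_mul_eq_one_right (by positivity) hval
  omega

theorem Complex.norm_one_add_ofReal_mul_lt {t : ℝ} (ht : 0 < t) {ζ : ℂ} (hζ : ‖ζ‖ = 1)
    (hζ1 : ζ ≠ 1) : ‖1 + t * ζ‖ < 1 + t := by
  have hnorm : ‖(t : ℂ) * ζ‖ = t := by simp [hζ, ht.le]
  have hray : ¬SameRay ℝ (1 : ℂ) (t * ζ) := by
    rw [sameRay_iff_inv_norm_smul_eq_of_ne one_ne_zero (by simp [ht.ne', ← norm_ne_zero_iff, hζ]),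
      hnorm, Complex.real_smul, Complex.real_smul]
    simpa [ht.ne'] using hζ1.symm
  calc ‖1 + t * ζ‖ < ‖(1 : ℂ)‖ + ‖(t : ℂ) * ζ‖ := norm_add_lt_of_not_sameRay hray
    _ = 1 + t := by rw [norm_one, hnorm]

theorem Complex.exists_pow_eq_and_one_add_pow_ne {p n : ℕ} (hp : 1 < p) (hn : n ≠ 0) {a : ℝ}
    (ha : 0 < a) (c : ℂ) : ∃ w : ℂ, w ^ p = a ∧ (1 + w) ^ n ≠ c := by
  by_contra! h
  set t : ℝ := a ^ (p⁻¹ : ℝ)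
  have ht : 0 < t := Real.rpow_pos_of_pos ha _
  have htp : (t : ℂ) ^ p = a := by
    rw [← Complex.ofReal_pow, Real.rpow_inv_natCast_pow ha.le (by omega)]
  have hζ := Complex.isPrimitiveRoot_exp p (by omega)
  set ζ := Complex.exp (2 * Real.pi * Complex.I / p)
  have hlt := Complex.norm_one_add_ofReal_mul_lt ht (hζ.norm'_eq_one (by omega)) (hζ.ne_one hp)
  have hreal : (1 + (t : ℂ)) ^ n = c := h _ htp
  have hrot : (1 + t * ζ) ^ n = c := h _ (by rw [mul_pow, hζ.pow_eq_one, mul_one, htp])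
  have hnorm : ‖1 + (t : ℂ)‖ = 1 + t := by
    rw [← Complex.ofReal_one, ← Complex.ofReal_add, Complex.norm_real,
      Real.norm_of_nonneg (by positivity)]
  have hpow : ‖1 + t * ζ‖ ^ n < ‖1 + (t : ℂ)‖ ^ n :=
    hnorm ▸ pow_lt_pow_left₀ hlt (norm_nonneg _) hn
  rw [← norm_pow, ← norm_pow, hreal, hrot] at hpow
  exact hpow.false

theorem one_add_pow_notMem_bot_s2 {L : Type*} [Field L] [Algebra ℚ L] {β : L} {p : ℕ} {a : ℚ}
    (hp : 1 < p) (ha : 0 < a) (hβ : minpoly ℚ β = X ^ p - C a) {n : ℕ} (hn : n ≠ 0) :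
    (1 + β) ^ n ∉ (⊥ : IntermediateField ℚ L) := by
  rw [mem_bot]
  rintro ⟨q, hq⟩
  have hdvd : X ^ p - C a ∣ (1 + X) ^ n - C q :=
    hβ ▸ minpoly.dvd ℚ β (by simp [← hq])
  obtain ⟨w, hwp, hw⟩ := Complex.exists_pow_eq_and_one_add_pow_ne hp hn (a := a)
    (by exact_mod_cast ha) q
  have hroot := aeval_eq_zero_of_dvd_aeval_eq_zero hdvd (x := w) (by simp [hwp])
  exact hw (by simpa [sub_eq_zero] using hroot)

theorem IntermediateField.inf_eq_bot_of_finrank_prime {K L : Type*} [Field K] [Field L]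
    [Algebra K L] {E F : IntermediateField K L} [FiniteDimensional K F]
    (hE : (finrank K E).Prime) (hlt : finrank K F < finrank K E) : E ⊓ F = ⊥ := by
  refine finrank_eq_one_iff.mp ((hE.eq_one_or_self_of_dvd _ ?_).resolve_right fun h ↦ ?_)
  · exact finrank_dvd_of_le_right inf_le_left
  · have := finrank_le_of_le_right (inf_le_right : E ⊓ F ≤ F)
    omega

theorem IntermediateField.finiteDimensional_adjoin_roots {K L : Type*} [Field K] [Field L]
    [Algebra K L] (𝓕 : Finset K[X]) (h𝓕 : ∀ P ∈ 𝓕, P ≠ 0) :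
    FiniteDimensional K (adjoin K {x : L | ∃ P ∈ 𝓕, aeval x P = 0}) := by
  have hfin : {x : L | ∃ P ∈ 𝓕, aeval x P = 0}.Finite :=
    (𝓕.finite_toSet.biUnion fun P _ ↦ P.rootSet_finite L).subset fun x ⟨P, hP, hx⟩ ↦
      Set.mem_biUnion hP ((mem_rootSet_of_ne (h𝓕 P hP)).mpr hx)
  have := hfin.to_subtype
  exact finiteDimensional_adjoin fun x ⟨P, hP, hx⟩ ↦
    IsAlgebraic.isIntegral ⟨P, h𝓕 P hP, hx⟩

theorem exists_minpoly_eq_X_pow_sub_C (L : Type*) [Field L] [Algebra ℚ L] [IsAlgClosed L]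
    {p ℓ : ℕ} (hp : p.Prime) (hℓ : ℓ.Prime) : ∃ β : L, minpoly ℚ β = X ^ p - C (ℓ : ℚ) := by
  obtain ⟨β, hβ⟩ := IsAlgClosed.exists_pow_nat_eq (ℓ : L) hp.pos
  have hirr : Irreducible (X ^ p - C (ℓ : ℚ)) :=
    X_pow_sub_C_irreducible_of_prime hp (Rat.pow_ne_natCast_of_prime hp.one_lt hℓ)
  exact ⟨β, (minpoly.eq_of_irreducible_of_monic hirr (by simp [hβ])
    (monic_X_pow_sub_C _ hp.ne_zero)).symm⟩

/-- If `𝓕` is a finite set of nonzero rational polynomials, then the subfield of `ℚ̄`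
generated over `ℚ` by all roots of polynomials in `𝓕` has property P: there is an
algebraic number `α` with `αⁿ` outside this field for all `n ≥ 1`. -/
theorem stmt_2 (𝓕 : Finset ℚ[X]) (h𝓕 : ∀ P ∈ 𝓕, P ≠ 0) :
    ∃ α : AlgebraicClosure ℚ, ∀ n : ℕ, 1 ≤ n →
      α ^ n ∉ IntermediateField.adjoin ℚ
        {x : AlgebraicClosure ℚ | ∃ P ∈ 𝓕, aeval x P = 0} := by
  set K := adjoin ℚ {x : AlgebraicClosure ℚ | ∃ P ∈ 𝓕, aeval x P = 0}
  have : FiniteDimensional ℚ K := finiteDimensional_adjoin_roots 𝓕 h𝓕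
  obtain ⟨p, hKp, hp⟩ := Nat.exists_infinite_primes (finrank ℚ K + 1)
  obtain ⟨β, hβ⟩ := exists_minpoly_eq_X_pow_sub_C (AlgebraicClosure ℚ) hp Nat.prime_two
  have hβint : IsIntegral ℚ β := minpoly.ne_zero_iff.mp (hβ ▸ X_pow_sub_C_ne_zero hp.pos _)
  have hdeg : finrank ℚ ℚ⟮β⟯ = p := by
    rw [adjoin.finrank hβint, hβ, natDegree_X_pow_sub_C]
  have hinf : ℚ⟮β⟯ ⊓ K = ⊥ := inf_eq_bot_of_finrank_prime (hdeg ▸ hp) (by rw [hdeg]; omega)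
  refine ⟨1 + β, fun n hn hmem ↦ ?_⟩
  have hβn : (1 + β) ^ n ∈ ℚ⟮β⟯ := pow_mem (add_mem (one_mem _) (mem_adjoin_simple_self ℚ β)) n
  have hbot : (1 + β) ^ n ∈ ℚ⟮β⟯ ⊓ K := ⟨hβn, hmem⟩
  rw [hinf] at hbot
  exact one_add_pow_notMem_bot_s2 hp.one_lt two_pos (by exact_mod_cast hβ) (by omega) hbot
end

section
/- Let k be a positive integer and let 𝓕 = {P ∈ ℚ[x] : P nonzero and deg P ≤ k}. Then the field ℚ(𝓡_𝓕), the subfield of ℚ̄ generated over ℚ by all roots of all nonzero rational polynomials of degree at most k, has property P: there exists α ∈ ℚ̄ such that αⁿ ∉ ℚ(𝓡_𝓕) for all integers n ≥ 1. -/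
/-!
Take a prime `ℓ > max k 2`, a root `θ` of `X ^ ℓ - 2` and `α = θ + 1`, so that `ℚ(α)` has prime
degree `ℓ`. No power `αⁿ` is rational: all complex conjugates `β` of `α` would then share `|β|`
and `|β - 1|`, which allows at most two of them, while there are `ℓ ≥ 3`. Hence every `ℚ(αⁿ)`
is all of `ℚ(α)`, of degree `ℓ`. On the other hand, adjoining finitely many roots of polynomials
of degree `≤ k` one at a time multiplies the degree by factors `≤ k`, so it gives a field whose
degree divides a power of `k!`, which `ℓ` does not divide.
-/

open Polynomial IntermediateField Module Nat ComplexConjugate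

namespace Complex

theorem eq_or_eq_conj_of_norm_eq_of_norm_sub_one_eq {β γ : ℂ} (h₀ : ‖β‖ = ‖γ‖)
    (h₁ : ‖β - 1‖ = ‖γ - 1‖) : β = γ ∨ β = conj γ := by
  have h₀' : normSq β = normSq γ := by rw [normSq_eq_norm_sq, normSq_eq_norm_sq, h₀]
  have h₁' : normSq (β - 1) = normSq (γ - 1) := by
    rw [normSq_eq_norm_sq, normSq_eq_norm_sq, h₁]
  simp only [normSq_apply, sub_re, sub_im, one_re, one_im] at h₀' h₁'
  have hre : β.re = γ.re := by nlinarith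
  have him : β.im ^ 2 = γ.im ^ 2 := by nlinarith
  rcases sq_eq_sq_iff_eq_or_eq_neg.mp him with h | h
  · exact .inl (ext hre h)
  · exact .inr (ext (by simpa using hre) (by simpa using h))

end Complex

theorem Rat.pow_ne_two {ℓ : ℕ} (hℓ : 2 ≤ ℓ) (b : ℚ) : b ^ ℓ ≠ 2 := by
  intro h
  have hv : (ℓ : ℤ) * padicValRat 2 b = 1 := by
    rw [← padicValRat.pow, h]
    simpa using padicValRat.self (p := 2) one_lt_two
  have := Int.eq_one_of_mul_eq_one_right (by omega) hv
  omega

section Minpoly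

variable {E : Type*} [Field E] [Algebra ℚ E]

theorem natDegree_minpoly_le_two_of_pow_eq {x : E} (hx : IsIntegral ℚ x) {n m : ℕ}
    (hn : n ≠ 0) (hm : m ≠ 0) {q r : ℚ} (hq : x ^ n = algebraMap ℚ E q)
    (hr : (x - 1) ^ m = algebraMap ℚ E r) : (minpoly ℚ x).natDegree ≤ 2 := by
  set μ := minpoly ℚ x
  have hroot : ∀ β ∈ μ.rootSet ℂ, β ^ n = q ∧ (β - 1) ^ m = r := by
    intro β hβ
    have hμβ : aeval β μ = 0 := (mem_rootSet.mp hβ).2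
    have h₀ : μ ∣ X ^ n - C q := minpoly.dvd _ _ (by simp [hq])
    have h₁ : μ ∣ (X - 1) ^ m - C r := minpoly.dvd _ _ (by simp [hr])
    constructor
    · simpa [sub_eq_zero] using aeval_eq_zero_of_dvd_aeval_eq_zero h₀ hμβ
    · simpa [sub_eq_zero] using aeval_eq_zero_of_dvd_aeval_eq_zero h₁ hμβ
  have hcard : (μ.rootSet ℂ).toFinset.card = μ.natDegree := by
    rw [Set.toFinset_card, card_rootSet_eq_natDegree (minpoly.irreducible hx).separable
      (IsAlgClosed.splits _)]
  rw [← hcard]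
  obtain hempty | ⟨β₀, hβ₀⟩ := (μ.rootSet ℂ).eq_empty_or_nonempty
  · simp [hempty]
  have hsub : (μ.rootSet ℂ).toFinset ⊆ {β₀, conj β₀} := by
    intro β hβ
    rw [Set.mem_toFinset] at hβ
    obtain ⟨hβn, hβm⟩ := hroot β hβ
    obtain ⟨hβ₀n, hβ₀m⟩ := hroot β₀ hβ₀
    have h₀ : ‖β‖ = ‖β₀‖ := (pow_left_inj₀ (norm_nonneg _) (norm_nonneg _) hn).mp
      (by rw [← norm_pow, ← norm_pow, hβn, hβ₀n])
    have h₁ : ‖β - 1‖ = ‖β₀ - 1‖ := (pow_left_inj₀ (norm_nonneg _) (norm_nonneg _) hm).mp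
      (by rw [← norm_pow, ← norm_pow, hβm, hβ₀m])
    simpa using Complex.eq_or_eq_conj_of_norm_eq_of_norm_sub_one_eq h₀ h₁
  exact (Finset.card_le_card hsub).trans Finset.card_le_two

theorem natDegree_minpoly_of_pow_eq_two {ℓ : ℕ} (hℓ : ℓ.Prime) {θ : E} (hθ : θ ^ ℓ = 2) :
    (minpoly ℚ θ).natDegree = ℓ := by
  have hirr : Irreducible (X ^ ℓ - C (2 : ℚ)) :=
    X_pow_sub_C_irreducible_of_prime hℓ (Rat.pow_ne_two hℓ.two_le)
  rw [← minpoly.eq_of_irreducible_of_monic hirr (by simp [hθ]) (monic_X_pow_sub_C _ hℓ.ne_zero),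
    natDegree_X_pow_sub_C]

end Minpoly

theorem natDegree_minpoly_dvd_factorial {F K E : Type*} [Field F] [Field K] [Field E]
    [Algebra F K] [Algebra F E] [Algebra K E] [IsScalarTower F K E] {a : E} {P : F[X]} {k : ℕ}
    (hP : P ≠ 0) (hPk : P.natDegree ≤ k) (ha : aeval a P = 0) :
    (minpoly K a).natDegree ∣ k ! := by
  have hPK : P.map (algebraMap F K) ≠ 0 :=
    (Polynomial.map_ne_zero_iff (algebraMap F K).injective).mpr hP
  have haK : aeval a (P.map (algebraMap F K)) = 0 := by rwa [aeval_map_algebraMap]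
  refine Nat.dvd_factorial (minpoly.natDegree_pos (IsAlgebraic.isIntegral ⟨_, hPK, haK⟩)) ?_
  calc (minpoly K a).natDegree ≤ (P.map (algebraMap F K)).natDegree :=
        natDegree_le_of_dvd (minpoly.dvd K a haK) hPK
    _ = P.natDegree := natDegree_map _
    _ ≤ k := hPk

namespace IntermediateField

variable {F E : Type*} [Field F] [Field E] [Algebra F E]

theorem finrank_adjoin_insert (S : Set E) (a : E) :
    finrank F (adjoin F (insert a S)) =
      finrank F (adjoin F S) * finrank (adjoin F S) (adjoin F S)⟮a⟯ := by
  rw [← Set.union_singleton, ← adjoin_adjoin_left]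
  exact (Module.finrank_mul_finrank F (adjoin F S) (adjoin F S)⟮a⟯).symm

theorem finrank_adjoin_dvd_factorial_pow {k : ℕ} (T : Finset E)
    (hT : ∀ a ∈ T, ∃ P : F[X], P ≠ 0 ∧ P.natDegree ≤ k ∧ aeval a P = 0) :
    finrank F (adjoin F (T : Set E)) ∣ k ! ^ T.card := by
  classical
  induction T using Finset.induction_on with
  | empty => simp
  | insert a T ha ih =>
    obtain ⟨P, hP, hPk, hPa⟩ := hT a (T.mem_insert_self a)
    have hint : IsIntegral (adjoin F (T : Set E)) a :=
      (IsAlgebraic.isIntegral ⟨_, hP, hPa⟩).tower_top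
    rw [Finset.coe_insert, finrank_adjoin_insert, adjoin.finrank hint,
      Finset.card_insert_of_notMem ha, pow_succ]
    exact mul_dvd_mul (ih fun b hb => hT b (Finset.mem_insert_of_mem hb))
      (natDegree_minpoly_dvd_factorial hP hPk hPa)

theorem finrank_eq_of_le_of_prime {K L : IntermediateField F E} (h : K ≤ L) (hK : K ≠ ⊥)
    (hL : (finrank F L).Prime) : finrank F K = finrank F L :=
  (hL.eq_one_or_self_of_dvd _ (finrank_dvd_of_le_right h)).resolve_left
    fun h₁ => hK (finrank_eq_one_iff.mp h₁)

end IntermediateField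

theorem exists_finrank_adjoin_pow_eq_prime (E : Type*) [Field E] [Algebra ℚ E] [IsAlgClosed E]
    {ℓ : ℕ} (hℓ : ℓ.Prime) (hℓ₃ : 3 ≤ ℓ) : ∃ α : E, ∀ n ≠ 0, finrank ℚ ℚ⟮α ^ n⟯ = ℓ := by
  obtain ⟨θ, hθ⟩ := IsAlgClosed.exists_pow_nat_eq (2 : E) hℓ.pos
  have hint : IsIntegral ℚ (θ + 1) :=
    IsIntegral.add ⟨X ^ ℓ - C 2, monic_X_pow_sub_C _ hℓ.ne_zero, by simp [hθ]⟩ isIntegral_one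
  have hdeg : (minpoly ℚ (θ + 1)).natDegree = ℓ := by
    rw [← map_one (algebraMap ℚ E), minpoly.add_algebraMap, natDegree_comp, natDegree_X_sub_C,
      mul_one, natDegree_minpoly_of_pow_eq_two hℓ hθ]
  have hfinrank : finrank ℚ ℚ⟮θ + 1⟯ = ℓ := by rw [adjoin.finrank hint, hdeg]
  refine ⟨θ + 1, fun n hn => ?_⟩
  have hbot : ℚ⟮(θ + 1) ^ n⟯ ≠ ⊥ := by
    rw [Ne, adjoin_simple_eq_bot_iff, mem_bot]
    rintro ⟨q, hq⟩
    have := natDegree_minpoly_le_two_of_pow_eq hint hn hℓ.ne_zero hq.symm (r := 2) (by simp [hθ])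
    omega
  rw [finrank_eq_of_le_of_prime (adjoin_simple_le_iff.mpr (pow_mem (mem_adjoin_simple_self ℚ _) n))
    hbot (hfinrank ▸ hℓ), hfinrank]

theorem stmt_5_general (k : ℕ) :
    ∃ α : AlgebraicClosure ℚ, ∀ n : ℕ, 1 ≤ n →
      α ^ n ∉ IntermediateField.adjoin ℚ
        {x : AlgebraicClosure ℚ | ∃ P : ℚ[X], P ≠ 0 ∧ P.natDegree ≤ k ∧ aeval x P = 0} := by
  obtain ⟨ℓ, hℓ, hℓp⟩ := Nat.exists_infinite_primes (max (k + 1) 3)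
  obtain ⟨α, hα⟩ := exists_finrank_adjoin_pow_eq_prime (AlgebraicClosure ℚ) hℓp (by omega)
  refine ⟨α, fun n hn hmem => ?_⟩
  obtain ⟨T, hTS, hαT⟩ := exists_finset_of_mem_adjoin hmem
  have hdvd : ℓ ∣ k ! ^ T.card :=
    hα n (by omega) ▸ (finrank_dvd_of_le_right (adjoin_simple_le_iff.mpr hαT)).trans
      (finrank_adjoin_dvd_factorial_pow T hTS)
  have := hℓp.dvd_factorial.mp (hℓp.dvd_of_dvd_pow hdvd)
  omega

/-- Let `k ≥ 1` and `𝓕 = {P ∈ ℚ[x] : P ≠ 0, deg P ≤ k}`. Then the subfield of `ℚ̄`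
generated over `ℚ` by all roots of all nonzero rational polynomials of degree at most
`k` has property P. -/
theorem stmt_5 (k : ℕ) (hk : 1 ≤ k) :
    ∃ α : AlgebraicClosure ℚ, ∀ n : ℕ, 1 ≤ n →
      α ^ n ∉ IntermediateField.adjoin ℚ
        {x : AlgebraicClosure ℚ | ∃ P : ℚ[X], P ≠ 0 ∧ P.natDegree ≤ k ∧ aeval x P = 0} :=
  stmt_5_general k
end

section
/- Let 𝓕 be a family of nonzero polynomials with rational coefficients and suppose there exists a subfamily 𝓖 ⊆ 𝓕 such that 1 < [ℚ(𝓡_𝓕) : ℚ(𝓡_𝓖)] < ∞, i.e., ℚ(𝓡_𝓕) is a finite proper extension of ℚ(𝓡_𝓖). Then ℚ(𝓡_𝓕) has property P: there exists α ∈ ℚ̄ such that αⁿ ∉ ℚ(𝓡_𝓕) for all integers n ≥ 1. -/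
open Polynomial IntermediateField

/-
If `ℚ(𝓡_𝓕)` is a proper subfield of `ℚ̄`, pick `β` outside it. For all but finitely
many `N : ℕ`, no two distinct conjugates of `α = β + N` have a root of unity as their ratio
(the normal closure of `ℚ(β)` contains only finitely many roots of unity), so `x ↦ xⁿ` is
injective on the conjugates of `α`. Hence `ℚ(αⁿ) = ℚ(α) ∋ β`, and `αⁿ` is not in the subfield.

If `ℚ(𝓡_𝓕) = ℚ̄`, then `K = ℚ(𝓡_𝓖)` has finite index in `ℚ̄` and is stable under
`Gal(ℚ̄/ℚ)`, which is impossible. As in the Artin–Schreier theorem, Kummer theory rules out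
subfields of odd prime index in an algebraically closed field of characteristic zero, and a
`√(√·)` argument rules out involutions fixing `i`. Hence `Gal(ℚ̄/K) = {1, σ}` with
`σ i = -i`, so `-1` is not a square in `K` while `x` or `-x` is a square for every `x ∈ K`.
Choosing `r ∈ K` with `r⁴ = ±2` and `g ∈ Gal(ℚ̄/ℚ)` with `g (r²) = -r²`, stability gives
`g r ∈ K` and `(g r / r)² = -1`, a contradiction.
-/

theorem exists_algEquiv_apply_eq_of_aeval_minpoly {F Ω : Type*} [Field F] [Field Ω]
    [IsAlgClosed Ω] [Algebra F Ω] [Algebra.IsAlgebraic F Ω] {x y : Ω}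
    (hy : aeval y (minpoly F x) = 0) : ∃ g : Ω ≃ₐ[F] Ω, g x = y := by
  obtain ⟨φ, hφ⟩ := exists_algHom_of_splits_of_aeval
    (fun z => ⟨Algebra.IsIntegral.isIntegral z, IsAlgClosed.splits _⟩) hy
  exact ⟨AlgEquiv.ofBijective φ (Algebra.IsAlgebraic.algHom_bijective φ), hφ⟩

theorem exists_algEquiv_apply_eq_neg_of_sq_eq {F Ω : Type*} [Field F] [Field Ω] [IsAlgClosed Ω]
    [Algebra F Ω] [Algebra.IsAlgebraic F Ω] {q : Ω} {c : F} (hq : q ^ 2 = algebraMap F Ω c)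
    (hc : ¬ IsSquare c) : ∃ g : Ω ≃ₐ[F] Ω, g q = -q := by
  have hmin : minpoly F q = X ^ 2 - C c :=
    (minpoly.eq_of_irreducible_of_monic
      (X_pow_sub_C_irreducible_of_prime Nat.prime_two fun b hb => hc ⟨b, by rw [← hb, sq]⟩)
      (by simp [hq]) (monic_X_pow_sub_C c two_ne_zero)).symm
  exact exists_algEquiv_apply_eq_of_aeval_minpoly (by simp [hmin, hq])

theorem adjoin_pow_eq_adjoin_of_injOn {F Ω : Type*} [Field F] [PerfectField F] [Field Ω]
    [IsAlgClosed Ω] [Algebra F Ω] [Algebra.IsAlgebraic F Ω] {α : Ω} {n : ℕ}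
    (hα : Set.InjOn (· ^ n) ((minpoly F α).rootSet Ω)) : F⟮α ^ n⟯ = F⟮α⟯ := by
  have hint (z : Ω) : IsIntegral F z := Algebra.IsIntegral.isIntegral z
  have hmaps :
      Set.MapsTo (· ^ n) ((minpoly F α).rootSet Ω) ((minpoly F (α ^ n)).rootSet Ω) := by
    intro r hr
    obtain ⟨g, rfl⟩ := exists_algEquiv_apply_eq_of_aeval_minpoly (mem_rootSet.mp hr).2
    refine mem_rootSet.mpr ⟨minpoly.ne_zero (hint _), ?_⟩
    change aeval (g α ^ n) _ = 0
    rw [← map_pow, aeval_algEquiv, AlgHom.comp_apply, minpoly.aeval, map_zero]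
  have hdeg (z : Ω) : Fintype.card ((minpoly F z).rootSet Ω) = (minpoly F z).natDegree :=
    card_rootSet_eq_natDegree (Algebra.IsSeparable.isSeparable F z) (IsAlgClosed.splits (k := Ω) _)
  have : FiniteDimensional F F⟮α⟯ := adjoin.finiteDimensional (hint α)
  refine eq_of_le_of_finrank_le
    (adjoin_simple_le_iff.mpr (pow_mem (mem_adjoin_simple_self F α) n)) ?_
  rw [adjoin.finrank (hint α), adjoin.finrank (hint _), ← hdeg, ← hdeg]
  exact Fintype.card_le_of_injective _ (hmaps.restrict_inj.mpr hα)

theorem NumberField.finite_setOf_pow_eq_one (L : Type*) [Field L] [NumberField L] :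
    {z : L | ∃ k ≠ 0, z ^ k = 1}.Finite := by
  refine (NumberField.Embeddings.finite_of_norm_le L ℂ 1).subset ?_
  rintro z ⟨k, hk, hzk⟩
  refine ⟨⟨X ^ k - C 1, monic_X_pow_sub_C 1 hk, by simp [hzk]⟩, fun φ => ?_⟩
  have : ‖φ z‖ ^ k = 1 := by rw [← norm_pow, ← map_pow, hzk, map_one, norm_one]
  exact (pow_eq_one_iff_of_nonneg (norm_nonneg _) hk).mp this |>.le

section ArtinSchreier

variable {F K Ω : Type*} [Field F] [Field K] [Field Ω] [CharZero Ω] [IsAlgClosed Ω]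
  [Algebra F Ω] [Algebra K Ω]

theorem IsAlgClosed.exists_isPrimitiveRoot_of_finrank_eq_prime {p : ℕ} (hp : p.Prime)
    (hKp : Module.finrank K Ω = p) : ∃ z : K, IsPrimitiveRoot z p := by
  have : FiniteDimensional K Ω := Module.finite_of_finrank_pos (hKp ▸ hp.pos)
  have : NeZero (p : Ω) := ⟨Nat.cast_ne_zero.mpr hp.ne_zero⟩
  obtain ⟨ζ, hζ⟩ := HasEnoughRootsOfUnity.exists_primitiveRoot Ω p
  -- `K⟮ζ⟯` is `⊥` or `⊤` since `p` is prime, and `[K⟮ζ⟯ : K] ≤ φ(p) < p`.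
  obtain ⟨z, rfl⟩ : ζ ∈ (⊥ : IntermediateField K Ω) := by
    have := isSimpleOrder_of_finrank_prime K Ω (hKp ▸ hp)
    refine ((eq_bot_or_eq_top K⟮ζ⟯).resolve_right fun htop => ?_).le
      (mem_adjoin_simple_self K ζ)
    have hdeg : (minpoly K ζ).natDegree ≤ p - 1 := by
      rw [← Nat.totient_prime hp, ← natDegree_cyclotomic p K]
      refine natDegree_le_of_dvd (minpoly.dvd K ζ ?_) (cyclotomic_ne_zero p K)
      rw [aeval_def, eval₂_eq_eval_map, map_cyclotomic]
      exact isRoot_cyclotomic_iff.mpr hζ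
    rw [← adjoin.finrank (.of_finite K ζ), htop, finrank_top', hKp] at hdeg
    have := hp.pos
    omega
  exact ⟨z, hζ.of_map_of_injective (algebraMap K Ω).injective⟩

/-- Kummer theory: a cyclic extension `Ω / K` of degree `p` is `K(ᵖ√a)`, and then `Ω` would
also contain a root of the irreducible polynomial `X ^ p ^ 2 - a`. -/
theorem IsAlgClosed.finrank_ne_of_prime_of_ne_two {p : ℕ} (hp : p.Prime) (hp2 : p ≠ 2) :
    Module.finrank K Ω ≠ p := by
  intro hKp
  have : Fact p.Prime := ⟨hp⟩
  have : FiniteDimensional K Ω := Module.finite_of_finrank_pos (hKp ▸ hp.pos)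
  have : CharZero K := (algebraMap K Ω).charZero
  have : IsAlgClosure K Ω := ⟨inferInstance, inferInstance⟩
  have : IsCyclic Gal(Ω/K) := isCyclic_of_prime_card (by rw [IsGalois.card_aut_eq_finrank, hKp])
  obtain ⟨z, hz⟩ := IsAlgClosed.exists_isPrimitiveRoot_of_finrank_eq_prime hp hKp
  obtain ⟨α, ⟨a, ha⟩, hα⟩ := exists_root_adjoin_eq_top_of_isCyclic K Ω
    ⟨z, (mem_primitiveRoots (hKp ▸ hp.pos)).mpr (hKp ▸ hz)⟩
  have hirr := irreducible_X_pow_sub_C_of_root_adjoin_eq_top ha.symm hα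
  rw [hKp] at hirr
  have hirr2 : Irreducible (X ^ p ^ 2 - C a) := X_pow_sub_C_irreducible_of_prime_pow hp hp2 2
    fun b => pow_ne_of_irreducible_X_pow_sub_C hirr dvd_rfl hp.ne_one b
  obtain ⟨γ, hγ⟩ := IsAlgClosed.exists_pow_nat_eq (algebraMap K Ω a) (pow_pos hp.pos 2)
  have hmin : minpoly K γ = X ^ p ^ 2 - C a :=
    (minpoly.eq_of_irreducible_of_monic hirr2 (by simp [hγ])
      (monic_X_pow_sub_C a (pow_pos hp.pos 2).ne')).symm
  have := minpoly.natDegree_le (A := K) γ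
  rw [hmin, natDegree_X_pow_sub_C, hKp] at this
  nlinarith [hp.two_le]

theorem AlgEquiv.eq_one_of_pow_prime_of_ne_two {σ : Ω ≃ₐ[F] Ω} {p : ℕ} (hp : p.Prime)
    (hp2 : p ≠ 2) (hσ : σ ^ p = 1) : σ = 1 := by
  by_contra hne
  have : Fact p.Prime := ⟨hp⟩
  have hord : orderOf σ = p := orderOf_eq_prime hσ hne
  have : Finite (Subgroup.zpowers σ) :=
    (isOfFinOrder_iff_pow_eq_one.mpr ⟨p, hp.pos, hσ⟩).finite_zpowers
  have : Fintype (Subgroup.zpowers σ) := Fintype.ofFinite _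
  refine IsAlgClosed.finrank_ne_of_prime_of_ne_two
    (K := FixedPoints.subfield (Subgroup.zpowers σ) Ω) (Ω := Ω) hp hp2 ?_
  rw [FixedPoints.finrank_eq_card, Fintype.card_eq_nat_card, Nat.card_zpowers, hord]

theorem AlgEquiv.apply_eq_neg_of_mul_self_eq_one {σ : Ω ≃ₐ[F] Ω} (hσ2 : σ * σ = 1)
    (hσ : σ ≠ 1) {i : Ω} (hi : i ^ 2 = -1) : σ i = -i := by
  have hσσ (z : Ω) : σ (σ z) = z := by simpa using DFunLike.congr_fun hσ2 z
  have hσi : σ i = i ∨ σ i = -i :=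
    sq_eq_sq_iff_eq_or_eq_neg.mp (by rw [← map_pow, hi, map_neg, map_one])
  refine hσi.resolve_left fun hfix => ?_
  obtain ⟨x, hx⟩ : ∃ x, σ x ≠ x := by
    by_contra! h
    exact hσ (AlgEquiv.ext h)
  obtain ⟨w, hw⟩ := IsAlgClosed.exists_pow_nat_eq (x - σ x) two_pos
  -- `σ` negates `w ^ 2 = x - σ x`, so it sends `w` to `± i w`, and then `σ (σ w) = -w`.
  have hσw : σ w = i * w ∨ σ w = -(i * w) := sq_eq_sq_iff_eq_or_eq_neg.mp <| by
    rw [← map_pow, hw, map_sub, hσσ, mul_pow, hi, hw]; ring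
  have hw0 : w = -w := by
    conv_lhs => rw [← hσσ w]
    rcases hσw with h | h <;> simp only [h, map_mul, map_neg, hfix] <;> linear_combination w * hi
  have : x - σ x = 0 := by rw [← hw, CharZero.eq_neg_self_iff.mp hw0]; ring
  exact hx (sub_eq_zero.mp this).symm

theorem AlgEquiv.mul_self_eq_one_of_pow_eq_one {σ : Ω ≃ₐ[F] Ω} {n : ℕ} (hn : n ≠ 0)
    (hσ : σ ^ n = 1) : σ * σ = 1 := by
  induction n using Nat.strong_induction_on generalizing σ with
  | _ n ih =>
  rcases Nat.even_or_odd' n with ⟨m, rfl | rfl⟩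
  · have hσσ : (σ * σ) * (σ * σ) = 1 :=
      ih m (by omega) (by omega) (by rwa [← sq, ← pow_mul])
    by_contra hne
    obtain ⟨i, hi⟩ := IsAlgClosed.exists_pow_nat_eq (-1 : Ω) two_pos
    have hσi : σ i = i ∨ σ i = -i :=
      sq_eq_sq_iff_eq_or_eq_neg.mp (by rw [← map_pow, hi, map_neg, map_one])
    -- `σ * σ` fixes `i`, so it cannot be a nontrivial involution.
    have hfix : (σ * σ) i = i := by
      rcases hσi with h | h <;> simp [AlgEquiv.mul_apply, h]
    have hi0 : i ≠ 0 := by rintro rfl; norm_num at hi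
    rw [AlgEquiv.apply_eq_neg_of_mul_self_eq_one hσσ hne hi] at hfix
    exact hi0 (CharZero.neg_eq_self_iff.mp hfix)
  · rcases eq_or_ne m 0 with rfl | hm
    · rw [show σ = 1 by simpa using hσ, mul_one]
    have hp := Nat.minFac_prime (show 2 * m + 1 ≠ 1 by omega)
    have hpn := Nat.minFac_dvd (2 * m + 1)
    have hp2 : (2 * m + 1).minFac ≠ 2 := fun h => by
      rw [h] at hpn; omega
    refine ih ((2 * m + 1) / (2 * m + 1).minFac) (Nat.div_lt_self (by omega) hp.one_lt)
      (Nat.div_ne_zero_iff_of_dvd hpn |>.mpr ⟨by omega, hp.ne_zero⟩)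
      (AlgEquiv.eq_one_of_pow_prime_of_ne_two hp hp2 ?_)
    rw [← pow_mul, Nat.div_mul_cancel hpn, hσ]

variable [FiniteDimensional K Ω]

theorem IsAlgClosed.algEquiv_mul_self_eq_one (σ : Ω ≃ₐ[K] Ω) : σ * σ = 1 :=
  AlgEquiv.mul_self_eq_one_of_pow_eq_one (orderOf_pos σ).ne' (pow_orderOf_eq_one σ)

theorem IsAlgClosed.algEquiv_apply_eq_neg {σ : Ω ≃ₐ[K] Ω} (hσ : σ ≠ 1) {i : Ω}
    (hi : i ^ 2 = -1) : σ i = -i :=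
  AlgEquiv.apply_eq_neg_of_mul_self_eq_one (algEquiv_mul_self_eq_one σ) hσ hi

theorem IsAlgClosed.algEquiv_eq_of_ne_one {σ τ : Ω ≃ₐ[K] Ω} (hσ : σ ≠ 1) (hτ : τ ≠ 1) :
    σ = τ := by
  obtain ⟨i, hi⟩ := IsAlgClosed.exists_pow_nat_eq (-1 : Ω) two_pos
  have hi0 : i ≠ 0 := by rintro rfl; norm_num at hi
  by_contra hne
  have hστ : σ * τ ≠ 1 := fun h => hne (by
    rw [eq_inv_of_mul_eq_one_left h, inv_eq_of_mul_eq_one_right (algEquiv_mul_self_eq_one τ)])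
  have := algEquiv_apply_eq_neg hστ hi
  rw [AlgEquiv.mul_apply, algEquiv_apply_eq_neg hτ hi, map_neg, algEquiv_apply_eq_neg hσ hi,
    neg_neg] at this
  exact hi0 (CharZero.eq_neg_self_iff.mp this)

theorem IsAlgClosed.not_isSquare_neg_one (h : Module.finrank K Ω ≠ 1) :
    ¬ IsSquare (-1 : K) := by
  have : CharZero K := (algebraMap K Ω).charZero
  have : IsAlgClosure K Ω := ⟨inferInstance, inferInstance⟩
  have : Nontrivial (Ω ≃ₐ[K] Ω) := Finite.one_lt_card_iff_nontrivial.mp <| by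
    rw [IsGalois.card_aut_eq_finrank]
    exact lt_of_le_of_ne Module.finrank_pos h.symm
  obtain ⟨σ, hσ⟩ := exists_ne (1 : Ω ≃ₐ[K] Ω)
  rintro ⟨k, hk⟩
  have hi : algebraMap K Ω k ^ 2 = -1 := by rw [sq, ← map_mul, ← hk, map_neg, map_one]
  have := algEquiv_apply_eq_neg hσ hi
  rw [AlgEquiv.commutes, CharZero.eq_neg_self_iff, map_eq_zero] at this
  simp [this] at hk

end ArtinSchreier

/-- If `y ^ 2 = x` and `σ y = -y` for the nontrivial `σ ∈ Gal(Ω/K)`, then `i y ∈ K`. -/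
theorem IsAlgClosed.isSquare_or_isSquare_neg {K : Type*} (Ω : Type*) [Field K] [Field Ω]
    [CharZero Ω] [IsAlgClosed Ω] [Algebra K Ω] [FiniteDimensional K Ω] (x : K) :
    IsSquare x ∨ IsSquare (-x) := by
  have : CharZero K := (algebraMap K Ω).charZero
  have : IsAlgClosure K Ω := ⟨inferInstance, inferInstance⟩
  obtain ⟨y, hy⟩ := IsAlgClosed.exists_pow_nat_eq (algebraMap K Ω x) two_pos
  obtain ⟨i, hi⟩ := IsAlgClosed.exists_pow_nat_eq (-1 : Ω) two_pos
  have hsq {z : Ω} (hz : z ∈ (⊥ : IntermediateField K Ω)) {c : K}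
      (hc : z ^ 2 = algebraMap K Ω c) : IsSquare c := by
    obtain ⟨k, rfl⟩ := IntermediateField.mem_bot.mp hz
    exact ⟨k, (algebraMap K Ω).injective (by rw [← hc, map_mul, sq])⟩
  by_cases hfix : ∀ τ : Ω ≃ₐ[K] Ω, τ y = y
  · exact .inl (hsq ((IsGalois.mem_bot_iff_fixed y).mpr hfix) hy)
  obtain ⟨σ, hσy⟩ := not_forall.mp hfix
  have hσ : σ ≠ 1 := by rintro rfl; exact hσy rfl
  have hσy' : σ y = -y := (sq_eq_sq_iff_eq_or_eq_neg.mp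
    (by rw [← map_pow, hy, AlgEquiv.commutes])).resolve_left hσy
  refine .inr (hsq ((IsGalois.mem_bot_iff_fixed (i * y)).mpr fun τ => ?_)
    (by rw [mul_pow, hi, hy, map_neg]; ring))
  rcases eq_or_ne τ 1 with rfl | hτ
  · rfl
  rw [IsAlgClosed.algEquiv_eq_of_ne_one hτ hσ, map_mul, hσy',
    IsAlgClosed.algEquiv_apply_eq_neg hσ hi]
  ring

theorem exists_pow_four_eq_two_or_neg_two {K : Type*} [Field K]
    (h : ∀ x : K, IsSquare x ∨ IsSquare (-x)) : ∃ r : K, r ^ 4 = 2 ∨ r ^ 4 = -2 := by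
  obtain ⟨s, hs⟩ : ∃ s : K, s * s = 2 ∨ s * s = -2 := by
    rcases h 2 with ⟨s, hs⟩ | ⟨s, hs⟩
    exacts [⟨s, .inl hs.symm⟩, ⟨s, .inr hs.symm⟩]
  rcases h s with ⟨r, hr⟩ | ⟨r, hr⟩ <;>
    refine ⟨r, ?_⟩ <;> rw [show r ^ 4 = (r * r) * (r * r) by ring, ← hr] <;> simpa using hs

theorem IntermediateField.algHom_apply_mem_adjoin_roots {F E : Type*} [Field F] [Field E]
    [Algebra F E] (S : Set F[X]) (g : E →ₐ[F] E) {x : E}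
    (hx : x ∈ adjoin F {x : E | ∃ P ∈ S, aeval x P = 0}) :
    g x ∈ adjoin F {x : E | ∃ P ∈ S, aeval x P = 0} := by
  have : (adjoin F {x : E | ∃ P ∈ S, aeval x P = 0}).map g ≤
      adjoin F {x : E | ∃ P ∈ S, aeval x P = 0} := by
    rw [adjoin_map]
    refine adjoin.mono _ _ _ ?_
    rintro _ ⟨y, ⟨P, hP, hy⟩, rfl⟩
    exact ⟨P, hP, by rw [aeval_algHom_apply, hy, map_zero]⟩
  exact this ⟨x, hx, rfl⟩

section Rat

variable {Ω : Type*} [Field Ω] [CharZero Ω] [Algebra.IsAlgebraic ℚ Ω]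

theorem exists_injOn_pow_rootSet_minpoly_add_natCast (β : Ω) :
    ∃ N : ℕ, ∀ n ≠ 0, Set.InjOn (· ^ n) ((minpoly ℚ (β + N)).rootSet Ω) := by
  set R := (minpoly ℚ β).rootSet Ω
  set L := adjoin ℚ R
  have : FiniteDimensional ℚ L :=
    finiteDimensional_adjoin fun x _ => Algebra.IsIntegral.isIntegral x
  have : NumberField L := ⟨⟩
  set T : Set Ω := (↑) '' {z : L | ∃ k ≠ 0, z ^ k = 1}
  -- if `r ^ n = s ^ n` for conjugates `r ≠ s` of `β + N`, then `N` is recovered from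
  -- `r - N, s - N ∈ R` and the root of unity `r / s ≠ 1`.
  set S := (fun t : Ω × Ω × Ω => (t.1 - t.2.2 * t.2.1) / (t.2.2 - 1)) '' (R ×ˢ R ×ˢ T)
  have hRfin : R.Finite := (minpoly ℚ β).rootSet_finite Ω
  have hS : S.Finite :=
    (hRfin.prod (hRfin.prod ((NumberField.finite_setOf_pow_eq_one L).image _))).image _
  obtain ⟨N, hN⟩ := (hS.preimage Nat.cast_injective.injOn).exists_notMem
  refine ⟨N, fun n hn r hr s hs hrs => by_contra fun hne => hN ?_⟩
  have hR {x : Ω} (hx : x ∈ (minpoly ℚ (β + N)).rootSet Ω) : x - N ∈ R := by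
    rw [← map_natCast (algebraMap ℚ Ω), minpoly.add_algebraMap, mem_rootSet, aeval_comp] at hx
    refine mem_rootSet.mpr ⟨minpoly.ne_zero (Algebra.IsIntegral.isIntegral β), ?_⟩
    simpa using hx.2
  have hL {x : Ω} (hx : x ∈ (minpoly ℚ (β + N)).rootSet Ω) : x ∈ L := by
    simpa using add_mem (subset_adjoin ℚ R (hR hx)) (IntermediateField.natCast_mem L N)
  have hs0 : s ≠ 0 := by
    rintro rfl
    exact hne (pow_eq_zero_iff hn |>.mp (hrs.trans (zero_pow hn)))
  have hζ : r / s ∈ T := ⟨⟨r / s, div_mem (hL hr) (hL hs)⟩, ⟨n, hn, Subtype.ext <| by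
    simpa [div_pow, div_eq_one_iff_eq (pow_ne_zero n hs0)] using hrs⟩, rfl⟩
  have hζ1 : r / s - 1 ≠ 0 := by
    rwa [sub_ne_zero, ne_eq, div_eq_one_iff_eq hs0]
  refine ⟨(r - N, s - N, r / s), ⟨hR hr, hR hs, hζ⟩, ?_⟩
  field_simp
  ring

theorem IntermediateField.exists_forall_pow_notMem_of_ne_top [IsAlgClosed Ω]
    (K : IntermediateField ℚ Ω) (hK : K ≠ ⊤) : ∃ α : Ω, ∀ n : ℕ, 1 ≤ n → α ^ n ∉ K := by
  obtain ⟨β, hβ⟩ : ∃ β, β ∉ K := by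
    by_contra! h
    exact hK (eq_top_iff.mpr fun x _ => h x)
  obtain ⟨N, hN⟩ := exists_injOn_pow_rootSet_minpoly_add_natCast β
  refine ⟨β + N, fun n hn hmem => hβ ?_⟩
  have hle := adjoin_simple_le_iff.mpr hmem
  rw [adjoin_pow_eq_adjoin_of_injOn (hN n (by omega)), adjoin_simple_le_iff] at hle
  simpa using sub_mem hle (natCast_mem K N)

theorem IntermediateField.not_finiteDimensional_of_algEquiv_apply_mem [IsAlgClosed Ω]
    (K : IntermediateField ℚ Ω) (hK : K ≠ ⊤) (hstab : ∀ g : Ω ≃ₐ[ℚ] Ω, ∀ x ∈ K, g x ∈ K) :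
    ¬ FiniteDimensional K Ω := by
  intro hfd
  have hneg := IsAlgClosed.not_isSquare_neg_one (K := K) (mt finrank_eq_one_iff_eq_top.mp hK)
  obtain ⟨r, hr⟩ :=
    exists_pow_four_eq_two_or_neg_two (IsAlgClosed.isSquare_or_isSquare_neg (K := K) Ω)
  have hr0 : (r : Ω) ≠ 0 := by
    simpa using (show r ≠ 0 by rintro rfl; norm_num at hr)
  obtain ⟨g, hg⟩ : ∃ g : Ω ≃ₐ[ℚ] Ω, g ((r : Ω) ^ 2) = -(r : Ω) ^ 2 := by
    rcases hr with hr | hr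
    · refine exists_algEquiv_apply_eq_neg_of_sq_eq (c := 2) ?_ (by rw [Rat.isSquare_iff]; norm_num)
      rw [← pow_mul, map_ofNat, ← IntermediateField.coe_pow, hr]
      rfl
    · refine exists_algEquiv_apply_eq_neg_of_sq_eq (c := -2) ?_
        fun ⟨b, hb⟩ => by nlinarith [mul_self_nonneg b]
      rw [← pow_mul, map_neg, map_ofNat, ← IntermediateField.coe_pow, hr]
      rfl
  refine hneg ⟨⟨g r, hstab g r r.2⟩ / r, Subtype.ext ?_⟩
  rw [map_pow] at hg
  push_cast
  field_simp
  linear_combination -hg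

end Rat

theorem stmt_7_general (𝓖 : Set ℚ[X])
    (KF KG : IntermediateField ℚ (AlgebraicClosure ℚ))
    (hKG : KG = IntermediateField.adjoin ℚ {x : AlgebraicClosure ℚ | ∃ P ∈ 𝓖, aeval x P = 0})
    (hle : KG ≤ KF) (hne : KG ≠ KF)
    (hfin : FiniteDimensional KG (IntermediateField.extendScalars hle)) :
    ∃ α : AlgebraicClosure ℚ, ∀ n : ℕ, 1 ≤ n → α ^ n ∉ KF := by
  -- instance search finds `DivisionRing.toRatAlgebra`, not the algebra for which Mathlib
  -- registers `AlgebraicClosure.isAlgebraic`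
  have : Algebra.IsAlgebraic ℚ (AlgebraicClosure ℚ) := AlgebraicClosure.isAlgebraic ℚ
  refine KF.exists_forall_pow_notMem_of_ne_top fun hKF => ?_
  subst hKF
  rw [extendScalars_top] at hfin
  refine KG.not_finiteDimensional_of_algEquiv_apply_mem hne (fun g x hx => ?_)
    (Module.Finite.equiv topEquiv.toLinearEquiv)
  rw [hKG] at hx ⊢
  exact algHom_apply_mem_adjoin_roots 𝓖 g hx

/-- Let `𝓕` be a family of nonzero rational polynomials and `𝓖 ⊆ 𝓕` a subfamily such
that `ℚ(𝓡_𝓕)` is a finite proper extension of `ℚ(𝓡_𝓖)` (i.e. `1 < [ℚ(𝓡_𝓕) : ℚ(𝓡_𝓖)] < ∞`).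
Then `ℚ(𝓡_𝓕)` has property P. -/
theorem stmt_7 (𝓕 𝓖 : Set ℚ[X]) (h𝓕 : ∀ P ∈ 𝓕, P ≠ 0) (h𝓖 : 𝓖 ⊆ 𝓕)
    (KF KG : IntermediateField ℚ (AlgebraicClosure ℚ))
    (hKF : KF = IntermediateField.adjoin ℚ {x : AlgebraicClosure ℚ | ∃ P ∈ 𝓕, aeval x P = 0})
    (hKG : KG = IntermediateField.adjoin ℚ {x : AlgebraicClosure ℚ | ∃ P ∈ 𝓖, aeval x P = 0})
    (hle : KG ≤ KF) (hne : KG ≠ KF)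
    (hfin : FiniteDimensional KG (IntermediateField.extendScalars hle)) :
    ∃ α : AlgebraicClosure ℚ, ∀ n : ℕ, 1 ≤ n → α ^ n ∉ KF :=
  stmt_7_general 𝓖 KF KG hKG hle hne hfin
end

section
/- Let ℚ_ab denote the subfield of ℚ̄ generated over ℚ by all roots of unity (equivalently, by all roots of the polynomials xⁿ − 1, n ≥ 1). Then ℚ_ab has property P: there exists α ∈ ℚ̄ such that αⁿ ∉ ℚ_ab for all integers n ≥ 1. -/
/-!
Any two automorphisms of `ℚ̄` commute on `ℚ_ab`, since each acts on a root of unity `ζ` as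
`ζ ↦ ζ ^ a` for some `a`. Let `c = ∛2` and let `ω` be a primitive cube root of unity. As
`[ℚ(ω) : ℚ] = 2` and `[ℚ(c) : ℚ] = 3` are coprime, there are automorphisms `σ : c ↦ ω c, ω ↦ ω`
and `τ : c ↦ c, ω ↦ ω²`; their commutator `ρ` is trivial on `ℚ_ab` and still maps `c ↦ ω c`.
Take `α = 1 + c`. If `αⁿ ∈ ℚ_ab`, then `α`, `ρ α`, `ρ² α` have the same `n`-th power, so
`α ^ (3n) = N(α)ⁿ = 3ⁿ`. Since `(c - 1) α³ = 3`, this forces `(c - 1)ⁿ = 1`, so `c ∈ ℚ_ab`,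
contradicting `ρ c = ω c ≠ c`.
-/

open IntermediateField Polynomial Module

section Galois

variable {F L : Type*} [Field F] [Field L] [Algebra F L]

theorem AlgEquiv.apply_apply_comm_of_mem_adjoin_rootsOfUnity (σ τ : L ≃ₐ[F] L) {x : L}
    (hx : x ∈ adjoin F {x : L | ∃ m : ℕ, 1 ≤ m ∧ x ^ m = 1}) : σ (τ x) = τ (σ x) := by
  induction hx using adjoin_induction with
  | mem z hz =>
    obtain ⟨m, hm, hzm⟩ := hz
    have : NeZero (orderOf z) :=
      ⟨(isOfFinOrder_iff_pow_eq_one.mpr ⟨m, hm, hzm⟩).orderOf_pos.ne'⟩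
    have map_eq_pow (f : L ≃ₐ[F] L) : ∃ a : ℕ, z ^ a = f z := by
      obtain ⟨a, -, ha⟩ := (IsPrimitiveRoot.orderOf z).eq_pow_of_pow_eq_one (ξ := f z) (by
        rw [← map_pow, pow_orderOf_eq_one, map_one])
      exact ⟨a, ha⟩
    obtain ⟨a, ha⟩ := map_eq_pow σ
    obtain ⟨b, hb⟩ := map_eq_pow τ
    rw [← ha, ← hb, map_pow, map_pow, ← ha, ← hb, ← pow_mul, ← pow_mul, mul_comm]
  | algebraMap z => simp
  | add x y _ _ hx hy => simp [hx, hy]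
  | inv x _ hx => simp [hx]
  | mul x y _ _ hx hy => simp [hx, hy]

theorem minpoly_eq_map_of_coprime_finrank (E : IntermediateField F L) [FiniteDimensional F E]
    {x : L} (hx : IsIntegral F x) (hcop : (finrank F E).Coprime (minpoly F x).natDegree) :
    minpoly E x = (minpoly F x).map (algebraMap F E) := by
  have hxE : IsIntegral E x := hx.tower_top
  have : FiniteDimensional E E⟮x⟯ := adjoin.finiteDimensional hxE
  have : Module.Free E E⟮x⟯ := Module.Free.of_divisionRing _ _
  have hdvd : (minpoly F x).natDegree ∣ finrank E E⟮x⟯ * finrank F E := by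
    rw [mul_comm, finrank_mul_finrank F E E⟮x⟯]
    have := minpoly.degree_dvd (K := F) (L := E⟮x⟯.restrictScalars F)
      (x := ⟨x, (mem_restrictScalars F).mpr (mem_adjoin_simple_self E x)⟩) (isIntegral_iff.mpr hx)
    rwa [minpoly_eq] at this
  refine (eq_of_monic_of_dvd_of_natDegree_le (minpoly.monic hxE)
    ((minpoly.monic hx).map _) (minpoly.dvd_map_of_isScalarTower F E x) ?_).symm
  rw [natDegree_map, ← adjoin.finrank hxE]
  exact Nat.le_of_dvd finrank_pos (hcop.symm.dvd_of_dvd_mul_right hdvd)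

theorem exists_algEquiv_apply_eq_fixing_of_coprime [Normal F L] {z x y : L}
    (hz : IsIntegral F z) (hx : IsIntegral F x)
    (hcop : (minpoly F z).natDegree.Coprime (minpoly F x).natDegree)
    (hy : aeval y (minpoly F x) = 0) :
    ∃ σ : L ≃ₐ[F] L, σ x = y ∧ σ z = z := by
  have : FiniteDimensional F F⟮z⟯ := adjoin.finiteDimensional hz
  have hyE : aeval y (minpoly F⟮z⟯ x) = 0 := by
    rw [minpoly_eq_map_of_coprime_finrank F⟮z⟯ hx (by rwa [adjoin.finrank hz]),
      aeval_map_algebraMap, hy]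
  obtain ⟨σ, hσ⟩ := minpoly.exists_algEquiv_of_root' hx.tower_top.isAlgebraic hyE
  exact ⟨σ.restrictScalars F, hσ, σ.commutes ⟨z, mem_adjoin_simple_self F z⟩⟩

end Galois

section CubeRootOfTwo

variable {L : Type*} [Field L] {c ω : L}

theorem sub_one_pow_eq_one_of_map_one_add_pow (ρ : L →+* L) (hc : c ^ 3 = 2)
    (hω : IsPrimitiveRoot ω 3) (hρc : ρ c = ω * c) (hρω : ρ ω = ω) {n : ℕ}
    (hn : ρ ((1 + c) ^ n) = (1 + c) ^ n) : (c - 1) ^ n = 1 := by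
  have hω_sum : ω ^ 2 + ω + 1 = 0 := by
    have := hω.geom_sum_eq_zero (by norm_num)
    simp only [Finset.sum_range_succ, Finset.sum_range_zero, pow_zero, pow_one, zero_add] at this
    linear_combination this
  have h1 : ρ (1 + c) = 1 + ω * c := by rw [map_add, map_one, hρc]
  have h2 : ρ (1 + ω * c) = 1 + ω ^ 2 * c := by
    rw [map_add, map_one, map_mul, hρω, hρc]; ring
  have e1 : (1 + ω * c) ^ n = (1 + c) ^ n := by rw [← h1, ← map_pow, hn]
  have e2 : (1 + ω ^ 2 * c) ^ n = (1 + c) ^ n := by rw [← h2, ← map_pow, e1, hn]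
  have hnorm : (1 + c) * (1 + ω * c) * (1 + ω ^ 2 * c) = 3 := by
    linear_combination (c + ω * c ^ 2 + (ω - 1) * c ^ 3) * hω_sum + hc
  have hunit : (c - 1) * (1 + c) ^ 3 = 3 := by linear_combination (c + 2) * hc
  have hpow : ((1 + c) ^ 3) ^ n = 3 ^ n := by
    rw [pow_right_comm, ← hnorm, mul_pow, mul_pow, e1, e2]; ring
  have h3 : (3 : L) ≠ 0 := by simpa using (hω.neZero' : NeZero ((3 : ℕ) : L)).out
  refine mul_right_cancel₀ (pow_ne_zero n h3) ?_
  calc (c - 1) ^ n * 3 ^ n = ((c - 1) * (1 + c) ^ 3) ^ n := by rw [mul_pow, hpow]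
    _ = 1 * 3 ^ n := by rw [hunit, one_mul]

variable [CharZero L]

theorem minpoly_rat_of_pow_three_eq_two (hc : c ^ 3 = 2) : minpoly ℚ c = X ^ 3 - C 2 := by
  have no_rat_root (b : ℚ) : b ^ 3 ≠ 2 := by
    intro hb
    have h := padicValRat.pow (p := 2) b (k := 3)
    rw [hb, show padicValRat 2 2 = 1 from padicValRat.self one_lt_two] at h
    omega
  refine (minpoly.eq_of_irreducible_of_monic
    (X_pow_sub_C_irreducible_of_prime Nat.prime_three no_rat_root) ?_
    (monic_X_pow_sub_C _ three_ne_zero)).symm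
  simp [hc]

theorem exists_algEquiv_fixing_adjoin_rootsOfUnity [Normal ℚ L] (hc : c ^ 3 = 2)
    (hω : IsPrimitiveRoot ω 3) :
    ∃ ρ : L ≃ₐ[ℚ] L, (∀ x ∈ adjoin ℚ {x : L | ∃ m : ℕ, 1 ≤ m ∧ x ^ m = 1}, ρ x = x) ∧
      ρ c = ω * c ∧ ρ ω = ω := by
  have hωc : minpoly ℚ ω = cyclotomic 3 ℚ := (cyclotomic_eq_minpoly_rat hω three_pos).symm
  have hcop : (minpoly ℚ ω).natDegree.Coprime (minpoly ℚ c).natDegree := by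
    rw [hωc, minpoly_rat_of_pow_three_eq_two hc, natDegree_cyclotomic, natDegree_X_pow_sub_C,
      Nat.totient_prime Nat.prime_three]
    norm_num
  obtain ⟨σ, hσc, hσω⟩ := exists_algEquiv_apply_eq_fixing_of_coprime (y := ω * c)
    (Algebra.IsIntegral.isIntegral ω) (Algebra.IsIntegral.isIntegral c) hcop (by
      simp [minpoly_rat_of_pow_three_eq_two hc, mul_pow, hω.pow_eq_one, hc])
  obtain ⟨τ, hτω, hτc⟩ := exists_algEquiv_apply_eq_fixing_of_coprime (y := ω ^ 2)
    (Algebra.IsIntegral.isIntegral c) (Algebra.IsIntegral.isIntegral ω) hcop.symm (by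
      rw [hωc, cyclotomic_eq_minpoly_rat (hω.pow_of_coprime 2 (by norm_num)) three_pos,
        minpoly.aeval])
  refine ⟨(τ * σ)⁻¹ * (σ * τ), fun x hx => ?_, ?_, ?_⟩ <;>
    rw [AlgEquiv.mul_apply, AlgEquiv.aut_inv, AlgEquiv.symm_apply_eq, AlgEquiv.mul_apply,
      AlgEquiv.mul_apply]
  · exact AlgEquiv.apply_apply_comm_of_mem_adjoin_rootsOfUnity σ τ hx
  · simp only [map_mul, hσω, hσc, hτω, hτc]
    linear_combination (-(ω * c)) * hω.pow_eq_one
  · rw [hτω, map_pow, hσω, hτω]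

end CubeRootOfTwo

-- Instance search equips `AlgebraicClosure ℚ` with `DivisionRing.toRatAlgebra`, not the algebra
-- structure it is built with; the two agree because a `ℚ`-algebra structure is unique.
instance : IsAlgClosure ℚ (AlgebraicClosure ℚ) := by
  convert AlgebraicClosure.instIsAlgClosure ℚ
  · rfl
  · exact Subsingleton.elim _ _

/-- The field `ℚ_ab`, the subfield of `ℚ̄` generated over `ℚ` by all roots of unity,
has property P. -/
theorem stmt_9 :
    ∃ α : AlgebraicClosure ℚ, ∀ n : ℕ, 1 ≤ n →
      α ^ n ∉ IntermediateField.adjoin ℚ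
        {x : AlgebraicClosure ℚ | ∃ m : ℕ, 1 ≤ m ∧ x ^ m = 1} := by
  obtain ⟨c, hc⟩ := IsAlgClosed.exists_pow_nat_eq (2 : AlgebraicClosure ℚ) three_pos
  obtain ⟨ω, hω⟩ := HasEnoughRootsOfUnity.exists_primitiveRoot (AlgebraicClosure ℚ) 3
  obtain ⟨ρ, hρ_fix, hρc, hρω⟩ := exists_algEquiv_fixing_adjoin_rootsOfUnity hc hω
  refine ⟨1 + c, fun n hn hmem => ?_⟩
  have hc1 : (c - 1) ^ n = 1 :=
    sub_one_pow_eq_one_of_map_one_add_pow ρ.toRingHom hc hω hρc hρω (hρ_fix _ hmem)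
  have hc1K : c - 1 ∈ adjoin ℚ {x : AlgebraicClosure ℚ | ∃ m : ℕ, 1 ≤ m ∧ x ^ m = 1} :=
    subset_adjoin ℚ _ ⟨n, hn, hc1⟩
  have hcK : c ∈ adjoin ℚ {x : AlgebraicClosure ℚ | ∃ m : ℕ, 1 ≤ m ∧ x ^ m = 1} := by
    simpa using add_mem hc1K (one_mem _)
  have hc0 : c ≠ 0 := by rintro rfl; norm_num at hc
  refine hω.ne_one (by norm_num) (mul_right_cancel₀ hc0 ?_)
  rw [one_mul, ← hρc, hρ_fix c hcK]
end
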